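/- Under the standing assumptions, the derivative of the equilibrium consumer surplus CS with respect to the targeting precision β, evaluated at β = 0, is strictly negative. -/

import Mathlib

/-!
The equilibrium price p*(β) is a ratio of affine functions of β, and for fixed price the
surplus is affine in β, so CS′(0) = (A(p₀) − B(p₀) + B′(p₀)·p*′(0)) / (4t), where A and B are
the coefficients of β and 1 − β and p₀ = p*(0). Clearing the denominator D = D(0), this equals
−(α − δ)·Q / (4tD³), where Q, written in s = α + δ and p = αδ, is a sum of positive terms: the
quadratic 2s² − 7ps + 7p² has negative discriminant, and the cubic 4s³ − 10ps² + 2p²s + 5p³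
is positive because 2p ≤ s.
-/

theorem hasDerivAt_affine_div_affine_zero {n c d e : ℝ} (hd : d ≠ 0) :
    HasDerivAt (fun b => (n + b * c) / (d - b * e)) ((c * d + n * e) / d ^ 2) 0 := by
  have hnum : HasDerivAt (fun b : ℝ => n + b * c) c 0 := by
    simpa using ((hasDerivAt_id (0 : ℝ)).mul_const c).const_add n
  have hden : HasDerivAt (fun b : ℝ => d - b * e) (-e) 0 := by
    simpa using ((hasDerivAt_id (0 : ℝ)).mul_const e).const_sub d
  exact (hnum.div hden (by simpa using hd)).congr_deriv (by ring)

theorem hasDerivAt_mul_add_one_sub_mul_zero {g h : ℝ → ℝ} {h' : ℝ}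
    (hg : DifferentiableAt ℝ g 0) (hh : HasDerivAt h h' 0) :
    HasDerivAt (fun b => b * g b + (1 - b) * h b) (g 0 - h 0 + h') 0 := by
  have hsub : HasDerivAt (fun b : ℝ => 1 - b) (-1) 0 := by
    simpa using (hasDerivAt_id (0 : ℝ)).const_sub 1
  exact (((hasDerivAt_id 0).mul hg.hasDerivAt).add (hsub.mul hh)).congr_deriv
    (by simp only [zero_mul]; ring)

noncomputable def eqPrice (t v α δ β : ℝ) : ℝ :=
  (α * δ * t + v * ((1 - α) * δ + α * (1 - δ)) + β * (α - δ) * (t - v)) /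
    (2 * (α + δ) - 3 * α * δ - 2 * β * (α - δ))

noncomputable def consumerSurplus (t v α δ β : ℝ) : ℝ :=
  let P := eqPrice t v α δ β
  (β * ((1 - α) * δ * (2 * P + t - 2 * v) ^ 2 + α * t * (4 * v - 4 * P - t)) +
    (1 - β) * (2 * δ * (P - v) ^ 2 + 2 * α * (P - v) ^ 2 -
      α * δ * (2 * P + t - 2 * v) ^ 2)) / (4 * t)

noncomputable def surplusSlopeNumerator (s p t v : ℝ) : ℝ :=
  2 * (s - p) * (2 * s ^ 2 - 7 * p * s + 7 * p ^ 2) * (v - t) ^ 2 +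
    8 * p * (s - p) ^ 2 * t * (2 * t - v) +
    (4 * s ^ 3 - 10 * p * s ^ 2 + 2 * p ^ 2 * s + 5 * p ^ 3) * t ^ 2

theorem surplusSlopeNumerator_pos {s p t v : ℝ} (hp : 0 < p) (hps : 2 * p ≤ s) (ht : 0 < t)
    (hv : v < 2 * t) : 0 < surplusSlopeNumerator s p t v := by
  have hquad : 0 < 2 * s ^ 2 - 7 * p * s + 7 * p ^ 2 := by
    nlinarith [sq_nonneg (4 * s - 7 * p), sq_pos_of_pos hp]
  have hsp : 0 < s - p := by linarith
  have hv' : 0 < 2 * t - v := by linarith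
  have hcubic : 0 < 4 * s ^ 3 - 10 * p * s ^ 2 + 2 * p ^ 2 * s + 5 * p ^ 3 := by
    obtain ⟨u, hu, rfl⟩ : ∃ u, 0 ≤ u ∧ s = 2 * p + u := ⟨s - 2 * p, by linarith, by ring⟩
    have hexpand : 4 * (2 * p + u) ^ 3 - 10 * p * (2 * p + u) ^ 2 + 2 * p ^ 2 * (2 * p + u) +
        5 * p ^ 3 = p ^ 3 + 10 * p ^ 2 * u + 14 * p * u ^ 2 + 4 * u ^ 3 := by ring
    rw [hexpand]
    positivity
  unfold surplusSlopeNumerator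
  positivity

section

variable {t v α δ : ℝ}

theorem hasDerivAt_eqPrice_zero (hD : 2 * (α + δ) - 3 * α * δ ≠ 0) :
    HasDerivAt (eqPrice t v α δ)
      ((α - δ) * ((2 * (α + δ) - α * δ) * t - α * δ * v) / (2 * (α + δ) - 3 * α * δ) ^ 2) 0 := by
  have hform : eqPrice t v α δ = fun b =>
      (α * δ * t + v * ((1 - α) * δ + α * (1 - δ)) + b * ((α - δ) * (t - v))) /
        (2 * (α + δ) - 3 * α * δ - b * (2 * (α - δ))) := by
    funext b
    unfold eqPrice
    congr 1 <;> ring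
  rw [hform]
  exact (hasDerivAt_affine_div_affine_zero hD).congr_deriv (by ring)

theorem hasDerivAt_consumerSurplus_zero (ht : t ≠ 0) (hD : 2 * (α + δ) - 3 * α * δ ≠ 0) :
    HasDerivAt (consumerSurplus t v α δ)
      (-(α - δ) * surplusSlopeNumerator (α + δ) (α * δ) t v /
        (4 * t * (2 * (α + δ) - 3 * α * δ) ^ 3)) 0 := by
  have hP := hasDerivAt_eqPrice_zero (t := t) (v := v) hD
  have hB := ((((hP.sub_const v).pow 2).const_mul (2 * δ)).add
    (((hP.sub_const v).pow 2).const_mul (2 * α))).sub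
    (((((hP.const_mul 2).add_const t).sub_const (2 * v)).pow 2).const_mul (α * δ))
  have hA : DifferentiableAt ℝ (fun b => (1 - α) * δ * (2 * eqPrice t v α δ b + t - 2 * v) ^ 2 +
      α * t * (4 * v - 4 * eqPrice t v α δ b - t)) 0 := by
    have := hP.differentiableAt
    fun_prop
  refine ((hasDerivAt_mul_add_one_sub_mul_zero hA hB).div_const (4 * t)).congr_deriv ?_
  have hP₀ : eqPrice t v α δ 0 =
      (α * δ * t + v * ((1 - α) * δ + α * (1 - δ))) / (2 * (α + δ) - 3 * α * δ) := by
    simp [eqPrice]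
  simp only [Pi.add_apply, Pi.sub_apply, Pi.pow_apply, Nat.reduceSub, pow_one, Nat.cast_ofNat, hP₀,
    surplusSlopeNumerator]
  -- `field_simp` clears the denominator only once it is an atom
  generalize hD' : 2 * (α + δ) - 3 * α * δ = D at hD ⊢
  field_simp
  subst hD'
  ring

end

theorem stmt_13_general (t v α δ : ℝ) (ht : 0 < t) (hδ : 0 < δ) (hδα : δ < α) (hα : α < 1)
    (hv2 : v < 2 * t) :
    let CS : ℝ → ℝ := fun b =>
      let P := (α * δ * t + v * ((1 - α) * δ + α * (1 - δ)) + b * (α - δ) * (t - v)) /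
        (2 * (α + δ) - 3 * α * δ - 2 * b * (α - δ))
      (b * ((1 - α) * δ * (2 * P + t - 2 * v) ^ 2 + α * t * (4 * v - 4 * P - t)) +
        (1 - b) * (2 * δ * (P - v) ^ 2 + 2 * α * (P - v) ^ 2 -
          α * δ * (2 * P + t - 2 * v) ^ 2)) / (4 * t)
    deriv CS 0 < 0 := by
  show deriv (consumerSurplus t v α δ) 0 < 0
  have hαδ : 0 < α - δ := sub_pos.2 hδα
  have hp : 0 < α * δ := mul_pos (hδ.trans hδα) hδ
  have hps : 2 * (α * δ) ≤ α + δ := by nlinarith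
  have hD : 0 < 2 * (α + δ) - 3 * α * δ := by linarith
  have hQ := surplusSlopeNumerator_pos hp hps ht hv2
  rw [(hasDerivAt_consumerSurplus_zero ht.ne' hD.ne').deriv]
  exact div_neg_of_neg_of_pos (by nlinarith) (by positivity)

/-- Under the standing assumptions, the derivative of the equilibrium consumer
surplus CS with respect to the targeting precision β, evaluated at β = 0, is strictly
negative. -/
theorem stmt_13 (t v α δ : ℝ) (ht : 0 < t) (hδ : 0 < δ) (hδα : δ < α) (hα : α < 1)
    (hv1 : t * (α / ((2 - α) * δ) + 1 / 2) < v) (hv2 : v < 2 * t) :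
    let CS : ℝ → ℝ := fun b =>
      let P := (α * δ * t + v * ((1 - α) * δ + α * (1 - δ)) + b * (α - δ) * (t - v)) /
        (2 * (α + δ) - 3 * α * δ - 2 * b * (α - δ))
      (b * ((1 - α) * δ * (2 * P + t - 2 * v) ^ 2 + α * t * (4 * v - 4 * P - t)) +
        (1 - b) * (2 * δ * (P - v) ^ 2 + 2 * α * (P - v) ^ 2 -
          α * δ * (2 * P + t - 2 * v) ^ 2)) / (4 * t)
    deriv CS 0 < 0 :=
  stmt_13_general t v α δ ht hδ hδα hα hv2
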